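/- arXiv:2510.12867 — 3 statements merged into one kernel-verified Lean document; each statement's English description precedes it below -/
import Mathlib

section
/- Let p > 2 be prime and let (L,Q) be a quadratic factor on 𝔽_p^n. Then any atom of (L,Q) has VC₂-dimension at most 1. Explicitly: for any atom B of (L,Q), there do not exist x_0, x_1, y_0, y_1 ∈ 𝔽_p^n and z_S ∈ 𝔽_p^n for each S ⊆ {0,1}×{0,1} such that x_i + y_j + z_S ∈ B if and only if (i,j) ∈ S. -/
open scoped BigOperators Matrix

namespace TW

noncomputable section

/-- Normalized average of a complex-valued function over a finite set. -/
def expC {α : Type*} (s : Finset α) (f : α → ℂ) : ℂ := (s.card : ℂ)⁻¹ * ∑ x ∈ s, f x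

/-- Normalized average of a real-valued function over a finite set. -/
def expR {α : Type*} (s : Finset α) (f : α → ℝ) : ℝ := (s.card : ℝ)⁻¹ * ∑ x ∈ s, f x

/-- `k`-fold complex conjugation. -/
def cConj (k : ℕ) (z : ℂ) : ℂ := if k % 2 = 0 then z else (starRingEnd ℂ) z

/-- Select one of two elements according to a bit: `bsel false u v = u`, `bsel true u v = v`. -/
def bsel {α : Type*} (b : Bool) (u v : α) : α := if b then v else u

/-- The number of ones in a boolean vector. -/
def wt {k : ℕ} (ω : Fin k → Bool) : ℕ := (Finset.univ.filter fun i => ω i = true).card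

/-- The indicator function of a finite set, with values in `ℂ`. -/
def indC {α : Type*} [DecidableEq α] (A : Finset α) (x : α) : ℂ := if x ∈ A then 1 else 0

/-- The density `|A ∩ B| / |B|` of `A` on `B`. -/
def density {α : Type*} [DecidableEq α] (A B : Finset α) : ℝ :=
  ((A ∩ B).card : ℝ) / (B.card : ℝ)

/-- A growth function: an increasing positive function on `ℝ⁺`. -/
def GrowthFunction (σ : ℝ → ℝ) : Prop :=
  (∀ x : ℝ, 0 < x → 0 < σ x) ∧ ∀ x y : ℝ, 0 < x → x ≤ y → σ x ≤ σ y

/-- A polynomial growth function: a growth function bounded above by a polynomial on `ℝ⁺`. -/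
def PolyGrowthFunction (σ : ℝ → ℝ) : Prop :=
  GrowthFunction σ ∧ ∃ P : Polynomial ℝ, ∀ x : ℝ, 0 < x → σ x ≤ P.eval x

/-- `A ⊆ G` has the `m`-independence property (i.e. `VC`-dimension at least `m`). -/
def HasIP {G : Type*} [AddCommGroup G] (A : Set G) (m : ℕ) : Prop :=
  ∃ (a : Fin m → G) (b : Finset (Fin m) → G),
    ∀ (i : Fin m) (S : Finset (Fin m)), a i + b S ∈ A ↔ i ∈ S

/-- `A ⊆ G` has the `m`-`IP₂` property (i.e. `VC₂`-dimension at least `m`). -/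
def HasIP2 {G : Type*} [AddCommGroup G] (A : Set G) (m : ℕ) : Prop :=
  ∃ (a b : Fin m → G) (c : Finset (Fin m × Fin m) → G),
    ∀ (i j : Fin m) (S : Finset (Fin m × Fin m)), a i + b j + c S ∈ A ↔ (i, j) ∈ S

variable {p : ℕ}

/-- The atom of the linear factor `L` labelled by `a`. -/
def linAtom [NeZero p] {n ℓ : ℕ} (L : Fin ℓ → (Fin n → ZMod p)) (a : Fin ℓ → ZMod p) :
    Finset (Fin n → ZMod p) :=
  Finset.univ.filter fun x => ∀ i, x ⬝ᵥ L i = a i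

/-- A quadratic factor on `𝔽_p^n` of complexity `(ℓ, q)`: `ℓ` linearly independent vectors
together with `q` symmetric `n × n` matrices over `𝔽_p`. -/
structure QuadFactor (p n ℓ q : ℕ) where
  L : Fin ℓ → (Fin n → ZMod p)
  M : Fin q → Matrix (Fin n) (Fin n) (ZMod p)
  indep : LinearIndependent (ZMod p) L
  symm : ∀ j, (M j).IsSymm

/-- The atom of a quadratic factor labelled by `a = (linear label, quadratic label)`. -/
def qAtom [NeZero p] {n ℓ q : ℕ} (F : QuadFactor p n ℓ q)
    (a : (Fin ℓ → ZMod p) × (Fin q → ZMod p)) : Finset (Fin n → ZMod p) :=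
  Finset.univ.filter fun x =>
    (∀ i, x ⬝ᵥ F.L i = a.1 i) ∧ ∀ j, x ⬝ᵥ (F.M j *ᵥ x) = a.2 j

/-- The set of (nonempty) atoms of a quadratic factor. -/
def atoms [NeZero p] {n ℓ q : ℕ} (F : QuadFactor p n ℓ q) :
    Finset (Finset (Fin n → ZMod p)) :=
  ((Finset.univ : Finset ((Fin ℓ → ZMod p) × (Fin q → ZMod p))).image fun a => qAtom F a).filter
    fun B => B.Nonempty

/-- The quadratic factor `F` has rank at least `r`: every nontrivial linear combination of its
matrices has rank at least `r`. -/
def rankGe {n ℓ q : ℕ} (F : QuadFactor p n ℓ q) (r : ℝ) : Prop :=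
  ∀ lam : Fin q → ZMod p, lam ≠ 0 → r ≤ ((∑ j, lam j • F.M j).rank : ℝ)

/-- The bilinear level set `β(b)`. -/
def bilinSet [NeZero p] {n q : ℕ} (M : Fin q → Matrix (Fin n) (Fin n) (ZMod p))
    (b : Fin q → ZMod p) : Finset ((Fin n → ZMod p) × (Fin n → ZMod p)) :=
  Finset.univ.filter fun xy => ∀ j, xy.1 ⬝ᵥ (M j *ᵥ xy.2) = b j

/-- The characteristic measure `μ_{β(b)}` of a bilinear level set. -/
def bmu [NeZero p] {n q : ℕ} (M : Fin q → Matrix (Fin n) (Fin n) (ZMod p))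
    (b : Fin q → ZMod p) (x y : Fin n → ZMod p) : ℝ :=
  if (x, y) ∈ bilinSet M b then ((p : ℝ) ^ (2 * n)) / ((bilinSet M b).card : ℝ) else 0

/-- The label `Σ(d)` of the atom on which the local `U³` inner product evaluates its inputs. -/
def sigmaLabel {p : ℕ} {ℓ q : ℕ} (a₁ a₂ a₃ : (Fin ℓ → ZMod p) × (Fin q → ZMod p))
    (b₁₂ b₁₃ b₂₃ : Fin q → ZMod p) : (Fin ℓ → ZMod p) × (Fin q → ZMod p) :=
  (a₁.1 + a₂.1 + a₃.1, a₁.2 + a₂.2 + a₃.2 + 2 • (b₁₂ + b₁₃ + b₂₃))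

/-- The local `U²` inner product relative to the atoms `L(a₁)`, `L(a₂)`. -/
def localU2Inner [NeZero p] {n ℓ : ℕ} (L : Fin ℓ → (Fin n → ZMod p)) (a₁ a₂ : Fin ℓ → ZMod p)
    (f : (Fin 2 → Bool) → (Fin n → ZMod p) → ℂ) : ℂ :=
  expC (linAtom L a₁) fun x₀ => expC (linAtom L a₁) fun x₁ =>
  expC (linAtom L a₂) fun y₀ => expC (linAtom L a₂) fun y₁ =>
  ∏ ε : Fin 2 → Bool, cConj (wt ε) (f ε (bsel (ε 0) x₀ x₁ + bsel (ε 1) y₀ y₁))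

/-- The local `U²` semi-norm. -/
def localU2Norm [NeZero p] {n ℓ : ℕ} (L : Fin ℓ → (Fin n → ZMod p)) (a₁ a₂ : Fin ℓ → ZMod p)
    (f : (Fin n → ZMod p) → ℂ) : ℝ :=
  (localU2Inner L a₁ a₂ fun _ => f).re ^ ((1 : ℝ) / 4)

/-- The (global) `U²` inner product on `𝔽_p^n`. -/
def U2Inner [NeZero p] {n : ℕ} (f : (Fin 2 → Bool) → (Fin n → ZMod p) → ℂ) : ℂ :=
  expC (Finset.univ : Finset (Fin n → ZMod p)) fun x₀ =>
  expC (Finset.univ : Finset (Fin n → ZMod p)) fun x₁ =>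
  expC (Finset.univ : Finset (Fin n → ZMod p)) fun y₀ =>
  expC (Finset.univ : Finset (Fin n → ZMod p)) fun y₁ =>
  ∏ ε : Fin 2 → Bool, cConj (wt ε) (f ε (bsel (ε 0) x₀ x₁ + bsel (ε 1) y₀ y₁))

/-- The Gowers `U²` norm on `𝔽_p^n`. -/
def U2Norm [NeZero p] {n : ℕ} (f : (Fin n → ZMod p) → ℂ) : ℝ :=
  (U2Inner fun _ => f).re ^ ((1 : ℝ) / 4)

/-- The (global) `U³` inner product on `𝔽_p^n`. -/
def U3Inner [NeZero p] {n : ℕ} (f : (Fin 3 → Bool) → (Fin n → ZMod p) → ℂ) : ℂ :=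
  expC (Finset.univ : Finset (Fin n → ZMod p)) fun x₀ =>
  expC (Finset.univ : Finset (Fin n → ZMod p)) fun x₁ =>
  expC (Finset.univ : Finset (Fin n → ZMod p)) fun y₀ =>
  expC (Finset.univ : Finset (Fin n → ZMod p)) fun y₁ =>
  expC (Finset.univ : Finset (Fin n → ZMod p)) fun z₀ =>
  expC (Finset.univ : Finset (Fin n → ZMod p)) fun z₁ =>
  ∏ ω : Fin 3 → Bool,
    cConj (wt ω) (f ω (bsel (ω 0) x₀ x₁ + bsel (ω 1) y₀ y₁ + bsel (ω 2) z₀ z₁))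

/-- The Gowers `U³` norm on `𝔽_p^n`. -/
def U3Norm [NeZero p] {n : ℕ} (f : (Fin n → ZMod p) → ℂ) : ℝ :=
  (U3Inner fun _ => f).re ^ ((1 : ℝ) / 8)

/-- The local `U³` inner product relative to a quadratic factor, with label tuple
`d = (a₁, a₂, a₃, b₁₂, b₁₃, b₂₃)`. -/
def localU3Inner [NeZero p] {n ℓ q : ℕ} (F : QuadFactor p n ℓ q)
    (a₁ a₂ a₃ : (Fin ℓ → ZMod p) × (Fin q → ZMod p)) (b₁₂ b₁₃ b₂₃ : Fin q → ZMod p)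
    (f : (Fin 3 → Bool) → (Fin n → ZMod p) → ℂ) : ℂ :=
  expC (qAtom F a₁) fun x₀ => expC (qAtom F a₁) fun x₁ =>
  expC (qAtom F a₂) fun y₀ => expC (qAtom F a₂) fun y₁ =>
  expC (qAtom F a₃) fun z₀ => expC (qAtom F a₃) fun z₁ =>
  (∏ ij : Bool × Bool, (bmu F.M b₁₂ (bsel ij.1 x₀ x₁) (bsel ij.2 y₀ y₁) : ℂ)) *
  (∏ ik : Bool × Bool, (bmu F.M b₁₃ (bsel ik.1 x₀ x₁) (bsel ik.2 z₀ z₁) : ℂ)) *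
  (∏ jk : Bool × Bool, (bmu F.M b₂₃ (bsel jk.1 y₀ y₁) (bsel jk.2 z₀ z₁) : ℂ)) *
  ∏ ω : Fin 3 → Bool,
    cConj (wt ω) (f ω (bsel (ω 0) x₀ x₁ + bsel (ω 1) y₀ y₁ + bsel (ω 2) z₀ z₁))

/-- The local `U³` semi-norm. -/
def localU3Norm [NeZero p] {n ℓ q : ℕ} (F : QuadFactor p n ℓ q)
    (a₁ a₂ a₃ : (Fin ℓ → ZMod p) × (Fin q → ZMod p)) (b₁₂ b₁₃ b₂₃ : Fin q → ZMod p)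
    (f : (Fin n → ZMod p) → ℂ) : ℝ :=
  (localU3Inner F a₁ a₂ a₃ b₁₂ b₁₃ b₂₃ fun _ => f).re ^ ((1 : ℝ) / 8)

/-- The `m`-`IP` operator. -/
def IPop [NeZero p] {n : ℕ} (m : ℕ) (f : Fin m → Finset (Fin m) → (Fin n → ZMod p) → ℂ) : ℂ :=
  expC (Finset.univ : Finset (Fin m → Fin n → ZMod p)) fun x =>
  expC (Finset.univ : Finset (Finset (Fin m) → Fin n → ZMod p)) fun y =>
  ∏ i, ∏ S, f i S (x i + y S)

/-- The `m`-`IP₂` operator. -/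
def IP2op [NeZero p] {n : ℕ} (m : ℕ)
    (f : Fin m → Fin m → Finset (Fin m × Fin m) → (Fin n → ZMod p) → ℂ) : ℂ :=
  expC (Finset.univ : Finset (Fin m → Fin n → ZMod p)) fun x =>
  expC (Finset.univ : Finset (Fin m → Fin n → ZMod p)) fun y =>
  expC (Finset.univ : Finset (Finset (Fin m × Fin m) → Fin n → ZMod p)) fun z =>
  ∏ i, ∏ j, ∏ S, f i j S (x i + y j + z S)

/-- The local `m`-`IP` operator relative to the atoms `L(a₁)`, `L(a₂)`. -/
def localIPop [NeZero p] {n ℓ : ℕ} (m : ℕ) (L : Fin ℓ → (Fin n → ZMod p))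
    (a₁ a₂ : Fin ℓ → ZMod p) (f : Fin m → Finset (Fin m) → (Fin n → ZMod p) → ℂ) : ℂ :=
  expC (Fintype.piFinset fun _ : Fin m => linAtom L a₁) fun x =>
  expC (Fintype.piFinset fun _ : Finset (Fin m) => linAtom L a₂) fun y =>
  ∏ i, ∏ S, f i S (x i + y S)

/-- The local `m`-`IP₂` operator relative to a quadratic factor with label tuple `d`. -/
def localIP2op [NeZero p] {n ℓ q : ℕ} (m : ℕ) (F : QuadFactor p n ℓ q)
    (a₁ a₂ a₃ : (Fin ℓ → ZMod p) × (Fin q → ZMod p)) (b₁₂ b₁₃ b₂₃ : Fin q → ZMod p)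
    (f : Fin m → Fin m → Finset (Fin m × Fin m) → (Fin n → ZMod p) → ℂ) : ℂ :=
  expC (Fintype.piFinset fun _ : Fin m => qAtom F a₁) fun x =>
  expC (Fintype.piFinset fun _ : Fin m => qAtom F a₂) fun y =>
  expC (Fintype.piFinset fun _ : Finset (Fin m × Fin m) => qAtom F a₃) fun z =>
    (∏ i, ∏ j, (bmu F.M b₁₂ (x i) (y j) : ℂ)) *
    (∏ i, ∏ S, (bmu F.M b₁₃ (x i) (z S) : ℂ)) *
    (∏ j, ∏ S, (bmu F.M b₂₃ (y j) (z S) : ℂ)) *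
    ∏ i, ∏ j, ∏ S, f i j S (x i + y j + z S)

/-- The ternary multi-local `F`-operator, for a `3`-partite `3`-uniform hypergraph with parts
`U`, `V`, `W` and label tuples `e_{uvw} = (a u, b v, c w, d₁₂ u v, d₁₃ u w, d₂₃ v w)`. -/
def TFop [NeZero p] {n ℓ q m : ℕ} (F : QuadFactor p n ℓ q) (U V W : Finset (Fin m))
    (a b c : Fin m → (Fin ℓ → ZMod p) × (Fin q → ZMod p))
    (d₁₂ d₁₃ d₂₃ : Fin m → Fin m → (Fin q → ZMod p))
    (g : Fin m → Fin m → Fin m → (Fin n → ZMod p) → ℂ) : ℂ :=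
  expC (Fintype.piFinset fun u : {u // u ∈ U} => qAtom F (a u.1)) fun x =>
  expC (Fintype.piFinset fun v : {v // v ∈ V} => qAtom F (b v.1)) fun y =>
  expC (Fintype.piFinset fun w : {w // w ∈ W} => qAtom F (c w.1)) fun z =>
    (∏ u, ∏ v, (bmu F.M (d₁₂ u.1 v.1) (x u) (y v) : ℂ)) *
    (∏ u, ∏ w, (bmu F.M (d₁₃ u.1 w.1) (x u) (z w) : ℂ)) *
    (∏ v, ∏ w, (bmu F.M (d₂₃ v.1 w.1) (y v) (z w) : ℂ)) *
    ∏ u, ∏ v, ∏ w, g u.1 v.1 w.1 (x u + y v + z w)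

end

lemma quad_expand {p n : ℕ} (M : Matrix (Fin n) (Fin n) (ZMod p)) (u v w : Fin n → ZMod p) :
    (u + v + w) ⬝ᵥ (M *ᵥ (u + v + w)) =
      u ⬝ᵥ (M *ᵥ u) + v ⬝ᵥ (M *ᵥ v) + w ⬝ᵥ (M *ᵥ w) +
      (u ⬝ᵥ (M *ᵥ v) + v ⬝ᵥ (M *ᵥ u)) + (u ⬝ᵥ (M *ᵥ w) + w ⬝ᵥ (M *ᵥ u)) +
      (v ⬝ᵥ (M *ᵥ w) + w ⬝ᵥ (M *ᵥ v)) := by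
  simp only [Matrix.mulVec_add, dotProduct_add, add_dotProduct]
  ring

/-- Quadratic atoms have `VC₂`-dimension at most 1. -/
theorem statement3 (p : ℕ) [NeZero p] (hp : p.Prime) (hp2 : 2 < p) (n ℓ q : ℕ)
    (F : QuadFactor p n ℓ q) (a : (Fin ℓ → ZMod p) × (Fin q → ZMod p))
    (ha : (qAtom F a).Nonempty) :
    ¬ ∃ (x y : Fin 2 → (Fin n → ZMod p)) (z : Finset (Fin 2 × Fin 2) → (Fin n → ZMod p)),
        ∀ (i j : Fin 2) (S : Finset (Fin 2 × Fin 2)),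
          x i + y j + z S ∈ qAtom F a ↔ (i, j) ∈ S := by
  rintro ⟨x, y, z, h⟩
  classical
  set S3 : Finset (Fin 2 × Fin 2) := {(0, 0), (0, 1), (1, 1)} with hS3
  set Sf : Finset (Fin 2 × Fin 2) := Finset.univ with hSf
  have h00 := (h 0 0 S3).mpr (by decide)
  have h01 := (h 0 1 S3).mpr (by decide)
  have h11 := (h 1 1 S3).mpr (by decide)
  have hf00 := (h 0 0 Sf).mpr (by decide)
  have hf01 := (h 0 1 Sf).mpr (by decide)
  have hf10 := (h 1 0 Sf).mpr (by decide)
  have hf11 := (h 1 1 Sf).mpr (by decide)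
  simp only [qAtom, Finset.mem_filter, Finset.mem_univ, true_and] at h00 h01 h11 hf00 hf01 hf10 hf11
  have hmem : x 1 + y 0 + z S3 ∈ qAtom F a := by
    simp only [qAtom, Finset.mem_filter, Finset.mem_univ, true_and]
    constructor
    · intro k
      have e1 := h00.1 k
      have e2 := hf00.1 k
      have e3 := hf10.1 k
      simp only [add_dotProduct] at e1 e2 e3 ⊢
      linear_combination e1 - e2 + e3
    · intro j
      have g00 := h00.2 j
      have g01 := h01.2 j
      have g11 := h11.2 j
      have f00 := hf00.2 j
      have f01 := hf01.2 j
      have f10 := hf10.2 j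
      have f11 := hf11.2 j
      rw [quad_expand] at g00 g01 g11 f00 f01 f10 f11 ⊢
      linear_combination g00 - g01 + g11 - f00 + f01 + f10 - f11
  exact absurd ((h 1 0 S3).mp hmem) (by decide)

end TW
end

section
/- Let p be prime and m ≥ 2 an integer. Suppose that for each i ∈ [m] and S ⊆ [m], f_{i,S} : 𝔽_p^n → ℂ satisfies ‖f_{i,S}‖_∞ ≤ 1. Then |T_{m-IP}((f_{i,S})_{i∈[m], S⊆[m]})| ≤ min_{i∈[m], S⊆[m]} ‖f_{i,S}‖_{U²}. -/
open scoped BigOperators Matrix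

namespace TW

section Aux
open Finset Complex

private lemma aux_upd_sum {ι V : Type*} [Fintype ι] [DecidableEq ι] [Fintype V]
    (i₀ : ι) (φ : (ι → V) → ℂ) :
    ∑ x : ι → V, ∑ u : V, φ (Function.update x i₀ u)
      = (Fintype.card V : ℂ) * ∑ y : ι → V, φ y := by
  have key : ∑ q : (ι → V) × V, φ (Function.update q.1 i₀ q.2)
      = ∑ q : (ι → V) × V, φ q.1 := by
    refine Fintype.sum_bijective (fun q => (Function.update q.1 i₀ q.2, q.1 i₀))
      (Function.Involutive.bijective ?_) _ _ (fun q => rfl)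
    intro q
    simp [Function.update_idem]
  calc ∑ x : ι → V, ∑ u : V, φ (Function.update x i₀ u)
      = ∑ q : (ι → V) × V, φ (Function.update q.1 i₀ q.2) := by
        rw [Fintype.sum_prod_type]
    _ = ∑ q : (ι → V) × V, φ q.1 := key
    _ = (Fintype.card V : ℂ) * ∑ y : ι → V, φ y := by
        rw [Fintype.sum_prod_type]
        simp only [Finset.sum_const, card_univ, nsmul_eq_mul]
        rw [← Finset.mul_sum]

private lemma aux_normsq_eq (z : ℂ) : ‖z‖ ^ 2 = (z * (starRingEnd ℂ) z).re := by
  rw [Complex.mul_conj, Complex.ofReal_re, Complex.normSq_eq_norm_sq]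

private lemma aux_sq_avg {V : Type*} [Fintype V] (t : V → ℝ) :
    (∑ x, t x) ^ 2 ≤ (Fintype.card V : ℝ) * ∑ x, t x ^ 2 := by
  simpa [card_univ] using sq_sum_le_card_mul_sum_sq (s := (univ : Finset V)) (f := t)

private lemma aux_swap4 {M : Type*} [AddCommMonoid M] {A B C D : Type*}
    [Fintype A] [Fintype B] [Fintype C] [Fintype D] (F : A → B → C → D → M) :
    ∑ c : C, ∑ d : D, ∑ a : A, ∑ b : B, F a b c d
      = ∑ a : A, ∑ b : B, ∑ c : C, ∑ d : D, F a b c d := by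
  calc ∑ c : C, ∑ d : D, ∑ a : A, ∑ b : B, F a b c d
      = ∑ c : C, ∑ a : A, ∑ d : D, ∑ b : B, F a b c d :=
        Finset.sum_congr rfl fun c _ => Finset.sum_comm
    _ = ∑ a : A, ∑ c : C, ∑ d : D, ∑ b : B, F a b c d := Finset.sum_comm
    _ = ∑ a : A, ∑ c : C, ∑ b : B, ∑ d : D, F a b c d :=
        Finset.sum_congr rfl fun a _ => Finset.sum_congr rfl fun c _ => Finset.sum_comm
    _ = ∑ a : A, ∑ b : B, ∑ c : C, ∑ d : D, F a b c d :=
        Finset.sum_congr rfl fun a _ => Finset.sum_comm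

set_option maxHeartbeats 1000000 in
private lemma aux_core {V : Type*} [Fintype V] [AddCommGroup V] (a b g : V → ℂ)
    (ha : ∀ u, ‖a u‖ ≤ 1) (hb : ∀ v, ‖b v‖ ≤ 1) :
    ‖∑ u, ∑ v, a u * b v * g (u + v)‖ ^ 4
      ≤ (Fintype.card V : ℝ) ^ 4 * (∑ x₀, ∑ x₁, ∑ y₀, ∑ y₁,
          g (x₀ + y₀) * (starRingEnd ℂ) (g (x₀ + y₁)) * (starRingEnd ℂ) (g (x₁ + y₀))
            * g (x₁ + y₁)).re := by
  set c : ℝ := (Fintype.card V : ℝ) with hc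
  have hc0 : 0 ≤ c := Nat.cast_nonneg _
  set g1 : V → ℂ := fun u => ∑ v, b v * g (u + v) with hg1
  set h : V → V → ℂ := fun v v' => ∑ u, g (u + v) * (starRingEnd ℂ) (g (u + v')) with hh
  have stepA : ‖∑ u, ∑ v, a u * b v * g (u + v)‖ ≤ ∑ u, ‖g1 u‖ := by
    calc ‖∑ u, ∑ v, a u * b v * g (u + v)‖ = ‖∑ u, a u * g1 u‖ := by
          congr 1; refine Finset.sum_congr rfl fun u _ => ?_
          rw [hg1, Finset.mul_sum]; refine Finset.sum_congr rfl fun v _ => by ring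
      _ ≤ ∑ u, ‖a u * g1 u‖ := norm_sum_le _ _
      _ ≤ ∑ u, ‖g1 u‖ := by
          refine Finset.sum_le_sum fun u _ => ?_
          rw [norm_mul]
          exact mul_le_of_le_one_left (norm_nonneg _) (ha u)
  have stepC : ∑ u, ‖g1 u‖ ^ 2 ≤ ∑ v, ∑ v', ‖h v v'‖ := by
    have e1 : ∑ u, ‖g1 u‖ ^ 2
        = (∑ v, ∑ v', b v * (starRingEnd ℂ) (b v') * h v v').re := by
      have hthis : ∀ u, ‖g1 u‖ ^ 2 = (∑ v, ∑ v', b v * (starRingEnd ℂ) (b v')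
          * (g (u + v) * (starRingEnd ℂ) (g (u + v')))).re := by
        intro u
        rw [aux_normsq_eq, hg1]
        congr 1
        rw [map_sum, Finset.sum_mul]
        refine Finset.sum_congr rfl fun v _ => ?_
        rw [Finset.mul_sum]
        refine Finset.sum_congr rfl fun v' _ => ?_
        simp only [map_mul]
        ring
      simp only [hthis]
      rw [← Complex.re_sum]
      congr 1
      rw [Finset.sum_comm]
      refine Finset.sum_congr rfl fun v _ => ?_
      rw [Finset.sum_comm]
      refine Finset.sum_congr rfl fun v' _ => ?_
      rw [hh, Finset.mul_sum]
    rw [e1, Complex.re_sum]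
    refine Finset.sum_le_sum fun v _ => ?_
    rw [Complex.re_sum]
    refine Finset.sum_le_sum fun v' _ => ?_
    calc (b v * (starRingEnd ℂ) (b v') * h v v').re
        ≤ ‖b v * (starRingEnd ℂ) (b v') * h v v'‖ := Complex.re_le_norm _
      _ ≤ ‖h v v'‖ := by
          rw [norm_mul, norm_mul, RCLike.norm_conj]
          have h1 : ‖b v‖ * ‖b v'‖ ≤ 1 :=
            mul_le_one₀ (hb v) (norm_nonneg _) (hb v')
          exact mul_le_of_le_one_left (norm_nonneg _) h1
  have stepE : ∑ v, ∑ v', ‖h v v'‖ ^ 2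
      = (∑ x₀, ∑ x₁, ∑ y₀, ∑ y₁,
          g (x₀ + y₀) * (starRingEnd ℂ) (g (x₀ + y₁)) * (starRingEnd ℂ) (g (x₁ + y₀))
            * g (x₁ + y₁)).re := by
    have hpt : ∀ v v', ‖h v v'‖ ^ 2 = (∑ u, ∑ u',
        g (u + v) * (starRingEnd ℂ) (g (u + v')) * (starRingEnd ℂ) (g (u' + v))
          * g (u' + v')).re := by
      intro v v'
      rw [aux_normsq_eq, hh]
      congr 1
      rw [map_sum, Finset.sum_mul]
      refine Finset.sum_congr rfl fun u _ => ?_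
      rw [Finset.mul_sum]
      refine Finset.sum_congr rfl fun u' _ => ?_
      simp only [map_mul, Complex.conj_conj]
      ring
    simp only [hpt, ← Complex.re_sum]
    congr 1
    exact aux_swap4 fun u u' v v' =>
      g (u + v) * (starRingEnd ℂ) (g (u + v')) * (starRingEnd ℂ) (g (u' + v)) * g (u' + v')
  set N : ℝ := ‖∑ u, ∑ v, a u * b v * g (u + v)‖ with hN
  have hN0 : 0 ≤ N := norm_nonneg _
  set S1 : ℝ := ∑ u, ‖g1 u‖ ^ 2 with hS1
  set S2 : ℝ := ∑ v, ∑ v', ‖h v v'‖ with hS2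
  set S3 : ℝ := ∑ v, ∑ v', ‖h v v'‖ ^ 2 with hS3
  have h1 : N ^ 2 ≤ c * S1 :=
    le_trans (pow_le_pow_left₀ hN0 stepA 2) (aux_sq_avg _)
  have h2 : c * S1 ≤ c * S2 := mul_le_mul_of_nonneg_left stepC hc0
  have h3 : S2 ^ 2 ≤ c ^ 2 * S3 := by
    have e2 : S2 = ∑ q : V × V, ‖h q.1 q.2‖ := (Fintype.sum_prod_type' _).symm
    have e3 : S3 = ∑ q : V × V, ‖h q.1 q.2‖ ^ 2 := (Fintype.sum_prod_type' _).symm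
    rw [e2, e3]
    have := aux_sq_avg (V := V × V) (fun q => ‖h q.1 q.2‖)
    simpa [Fintype.card_prod, hc, sq, mul_assoc] using this
  have h4 : N ^ 4 ≤ c ^ 4 * S3 := by
    have h12 : N ^ 2 ≤ c * S2 := h1.trans h2
    have hsq := pow_le_pow_left₀ (sq_nonneg N) h12 2
    calc N ^ 4 = (N ^ 2) ^ 2 := by ring
      _ ≤ (c * S2) ^ 2 := hsq
      _ = c ^ 2 * S2 ^ 2 := by ring
      _ ≤ c ^ 2 * (c ^ 2 * S3) := by
          exact mul_le_mul_of_nonneg_left h3 (pow_nonneg hc0 2)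
      _ = c ^ 4 * S3 := by ring
  calc N ^ 4 ≤ c ^ 4 * S3 := h4
    _ = c ^ 4 * (∑ x₀, ∑ x₁, ∑ y₀, ∑ y₁,
          g (x₀ + y₀) * (starRingEnd ℂ) (g (x₀ + y₁)) * (starRingEnd ℂ) (g (x₁ + y₀))
            * g (x₁ + y₁)).re := by rw [stepE]

private lemma aux_prod_eps {V : Type*} [AddCommGroup V] (g : V → ℂ) (x₀ x₁ y₀ y₁ : V) :
    ∏ ε : Fin 2 → Bool, cConj (wt ε) (g (bsel (ε 0) x₀ x₁ + bsel (ε 1) y₀ y₁))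
      = g (x₀ + y₀) * (starRingEnd ℂ) (g (x₀ + y₁)) * (starRingEnd ℂ) (g (x₁ + y₀))
          * g (x₁ + y₁) := by
  have huniv : (Finset.univ : Finset (Fin 2 → Bool)) =
      {![false,false], ![false,true], ![true,false], ![true,true]} := by decide
  rw [huniv, Finset.prod_insert (by decide), Finset.prod_insert (by decide),
    Finset.prod_insert (by decide), Finset.prod_singleton]
  simp only [show wt ![false,false] = 0 from by decide, show wt ![false,true] = 1 from by decide,
    show wt ![true,false] = 1 from by decide, show wt ![true,true] = 2 from by decide,
    Matrix.cons_val_zero, Matrix.cons_val_one, Matrix.head_cons, cConj, bsel]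
  norm_num
  ring

private lemma aux_u2_eq (p n : ℕ) [NeZero p] (g : (Fin n → ZMod p) → ℂ) :
    (U2Inner fun _ => g).re = ((Fintype.card (Fin n → ZMod p) : ℝ))⁻¹ ^ 4 *
      (∑ x₀, ∑ x₁, ∑ y₀, ∑ y₁, g (x₀ + y₀) * (starRingEnd ℂ) (g (x₀ + y₁))
        * (starRingEnd ℂ) (g (x₁ + y₀)) * g (x₁ + y₁)).re := by
  have hC : (U2Inner fun _ => g) = ((((Fintype.card (Fin n → ZMod p) : ℝ))⁻¹ ^ 4 : ℝ) : ℂ) *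
      ∑ x₀, ∑ x₁, ∑ y₀, ∑ y₁, g (x₀ + y₀) * (starRingEnd ℂ) (g (x₀ + y₁))
        * (starRingEnd ℂ) (g (x₁ + y₀)) * g (x₁ + y₁) := by
    simp only [U2Inner, expC, Finset.card_univ]
    simp only [aux_prod_eps]
    simp only [← Finset.mul_sum]
    push_cast
    ring
  rw [hC, Complex.re_ofReal_mul]

end Aux

set_option maxHeartbeats 1000000 in
/-- `IP` is controlled by `U²`. -/
theorem statement5 (p : ℕ) [NeZero p] (hp : p.Prime) (n m : ℕ) (hm : 2 ≤ m)
    (f : Fin m → Finset (Fin m) → (Fin n → ZMod p) → ℂ)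
    (hf : ∀ (i : Fin m) (S : Finset (Fin m)) (x : Fin n → ZMod p), ‖f i S x‖ ≤ 1) :
    ∀ (i : Fin m) (S : Finset (Fin m)), ‖IPop m f‖ ≤ U2Norm (f i S) := by
  classical
  intro i₀ S₀
  set g : (Fin n → ZMod p) → ℂ := f i₀ S₀ with hg
  have hcRpos : (0:ℝ) < (Fintype.card (Fin n → ZMod p) : ℝ) := by
    exact_mod_cast (Fintype.card_pos (α := Fin n → ZMod p))
  have hcR0 : ((Fintype.card (Fin n → ZMod p) : ℝ)) ≠ 0 := hcRpos.ne'
  have hcC : ((Fintype.card (Fin n → ZMod p) : ℂ)) ≠ 0 := by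
    exact_mod_cast (Nat.cast_ne_zero (R := ℂ)).mpr Fintype.card_pos.ne'
  have hNxpos : (0:ℝ) < (Fintype.card (Fin m → Fin n → ZMod p) : ℝ) := by
    exact_mod_cast (Fintype.card_pos (α := Fin m → Fin n → ZMod p))
  have hNypos : (0:ℝ) < (Fintype.card (Finset (Fin m) → Fin n → ZMod p) : ℝ) := by
    exact_mod_cast (Fintype.card_pos (α := Finset (Fin m) → Fin n → ZMod p))
  set A : (Finset (Fin m) → Fin n → ZMod p) → (Fin n → ZMod p) → ℂ :=
    fun y u => ∏ S ∈ Finset.univ.erase S₀, f i₀ S (u + y S) with hA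
  set B : (Fin m → Fin n → ZMod p) → (Fin n → ZMod p) → ℂ :=
    fun x v => ∏ i ∈ Finset.univ.erase i₀, f i S₀ (x i + v) with hB
  set D : (Fin m → Fin n → ZMod p) → (Finset (Fin m) → Fin n → ZMod p) → ℂ :=
    fun x y => ∏ i ∈ Finset.univ.erase i₀, ∏ S ∈ Finset.univ.erase S₀,
      f i S (x i + y S) with hD
  -- splitting the big product
  have hsplit : ∀ (x : Fin m → Fin n → ZMod p) (y : Finset (Fin m) → Fin n → ZMod p)
      (u v : Fin n → ZMod p),
      (∏ i, ∏ S, f i S (Function.update x i₀ u i + Function.update y S₀ v S))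
        = D x y * (A y u * B x v * g (u + v)) := by
    intro x y u v
    rw [← Finset.mul_prod_erase Finset.univ _ (Finset.mem_univ i₀)]
    have h1 : (∏ S, f i₀ S (Function.update x i₀ u i₀ + Function.update y S₀ v S))
        = g (u + v) * A y u := by
      rw [← Finset.mul_prod_erase Finset.univ
        (fun S => f i₀ S (Function.update x i₀ u i₀ + Function.update y S₀ v S))
        (Finset.mem_univ S₀)]
      simp only [Function.update_self]
      congr 1
      refine Finset.prod_congr rfl fun S hS => ?_
      rw [Function.update_of_ne (Finset.ne_of_mem_erase hS)]
    have h2 : (∏ i ∈ Finset.univ.erase i₀,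
        ∏ S, f i S (Function.update x i₀ u i + Function.update y S₀ v S))
        = B x v * D x y := by
      calc (∏ i ∈ Finset.univ.erase i₀,
            ∏ S, f i S (Function.update x i₀ u i + Function.update y S₀ v S))
          = ∏ i ∈ Finset.univ.erase i₀,
            (f i S₀ (x i + v) * ∏ S ∈ Finset.univ.erase S₀, f i S (x i + y S)) := by
            refine Finset.prod_congr rfl fun i hi => ?_
            rw [Function.update_of_ne (Finset.ne_of_mem_erase hi)]
            rw [← Finset.mul_prod_erase Finset.univ
              (fun S => f i S (x i + Function.update y S₀ v S)) (Finset.mem_univ S₀)]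
            simp only [Function.update_self]
            congr 1
            refine Finset.prod_congr rfl fun S hS => ?_
            rw [Function.update_of_ne (Finset.ne_of_mem_erase hS)]
        _ = B x v * D x y := Finset.prod_mul_distrib
    rw [h1, h2]
    ring
  -- rewriting the operator
  have hIP : IPop m f = (Fintype.card (Fin m → Fin n → ZMod p) : ℂ)⁻¹ *
      ((Fintype.card (Finset (Fin m) → Fin n → ZMod p) : ℂ)⁻¹ *
      ((Fintype.card (Fin n → ZMod p) : ℂ)⁻¹ * ((Fintype.card (Fin n → ZMod p) : ℂ)⁻¹ *
      ∑ x : Fin m → Fin n → ZMod p, ∑ y : Finset (Fin m) → Fin n → ZMod p,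
        (D x y * ∑ u : Fin n → ZMod p, ∑ v : Fin n → ZMod p,
          (A y u * B x v * g (u + v)))))) := by
    have sty : ∀ φ : (Finset (Fin m) → Fin n → ZMod p) → ℂ,
        ∑ y, φ y = ((Fintype.card (Fin n → ZMod p) : ℂ))⁻¹ *
          ∑ y, ∑ v, φ (Function.update y S₀ v) := by
      intro φ
      rw [aux_upd_sum S₀ φ, inv_mul_cancel_left₀ hcC]
    have stx : ∀ φ : (Fin m → Fin n → ZMod p) → ℂ,
        ∑ x, φ x = ((Fintype.card (Fin n → ZMod p) : ℂ))⁻¹ *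
          ∑ x, ∑ u, φ (Function.update x i₀ u) := by
      intro φ
      rw [aux_upd_sum i₀ φ, inv_mul_cancel_left₀ hcC]
    calc IPop m f
        = (Fintype.card (Fin m → Fin n → ZMod p) : ℂ)⁻¹ *
            ((Fintype.card (Finset (Fin m) → Fin n → ZMod p) : ℂ)⁻¹ *
            ∑ x : Fin m → Fin n → ZMod p, ∑ y : Finset (Fin m) → Fin n → ZMod p,
            ∏ i, ∏ S, f i S (x i + y S)) := by
          simp only [IPop, expC, Finset.card_univ]
          rw [← Finset.mul_sum]
      _ = (Fintype.card (Fin m → Fin n → ZMod p) : ℂ)⁻¹ *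
            ((Fintype.card (Finset (Fin m) → Fin n → ZMod p) : ℂ)⁻¹ *
            ∑ x : Fin m → Fin n → ZMod p, ((Fintype.card (Fin n → ZMod p) : ℂ)⁻¹ *
            ∑ y : Finset (Fin m) → Fin n → ZMod p, ∑ v : Fin n → ZMod p,
              ∏ i, ∏ S, f i S (x i + Function.update y S₀ v S))) := by
          congr 1; congr 1
          exact Finset.sum_congr rfl fun x _ =>
            sty (fun y => ∏ i, ∏ S, f i S (x i + y S))
      _ = (Fintype.card (Fin m → Fin n → ZMod p) : ℂ)⁻¹ *
            ((Fintype.card (Finset (Fin m) → Fin n → ZMod p) : ℂ)⁻¹ *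
            ((Fintype.card (Fin n → ZMod p) : ℂ)⁻¹ *
            ∑ x : Fin m → Fin n → ZMod p,
            ∑ y : Finset (Fin m) → Fin n → ZMod p, ∑ v : Fin n → ZMod p,
              ∏ i, ∏ S, f i S (x i + Function.update y S₀ v S))) := by
          rw [← Finset.mul_sum]
      _ = (Fintype.card (Fin m → Fin n → ZMod p) : ℂ)⁻¹ *
            ((Fintype.card (Finset (Fin m) → Fin n → ZMod p) : ℂ)⁻¹ *
            ((Fintype.card (Fin n → ZMod p) : ℂ)⁻¹ *
            ((Fintype.card (Fin n → ZMod p) : ℂ)⁻¹ *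
            ∑ x : Fin m → Fin n → ZMod p, ∑ u : Fin n → ZMod p,
            ∑ y : Finset (Fin m) → Fin n → ZMod p, ∑ v : Fin n → ZMod p,
              ∏ i, ∏ S, f i S (Function.update x i₀ u i + Function.update y S₀ v S)))) := by
          congr 1; congr 1; congr 1
          exact stx (fun x => ∑ y : Finset (Fin m) → Fin n → ZMod p, ∑ v : Fin n → ZMod p,
            ∏ i, ∏ S, f i S (x i + Function.update y S₀ v S))
      _ = (Fintype.card (Fin m → Fin n → ZMod p) : ℂ)⁻¹ *
            ((Fintype.card (Finset (Fin m) → Fin n → ZMod p) : ℂ)⁻¹ *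
            ((Fintype.card (Fin n → ZMod p) : ℂ)⁻¹ *
            ((Fintype.card (Fin n → ZMod p) : ℂ)⁻¹ *
            ∑ x : Fin m → Fin n → ZMod p, ∑ y : Finset (Fin m) → Fin n → ZMod p,
            ∑ u : Fin n → ZMod p, ∑ v : Fin n → ZMod p,
              ∏ i, ∏ S, f i S (Function.update x i₀ u i + Function.update y S₀ v S)))) := by
          congr 1; congr 1; congr 1; congr 1
          exact Finset.sum_congr rfl fun x _ => Finset.sum_comm
      _ = (Fintype.card (Fin m → Fin n → ZMod p) : ℂ)⁻¹ *
            ((Fintype.card (Finset (Fin m) → Fin n → ZMod p) : ℂ)⁻¹ *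
            ((Fintype.card (Fin n → ZMod p) : ℂ)⁻¹ *
            ((Fintype.card (Fin n → ZMod p) : ℂ)⁻¹ *
            ∑ x : Fin m → Fin n → ZMod p, ∑ y : Finset (Fin m) → Fin n → ZMod p,
              (D x y * ∑ u : Fin n → ZMod p, ∑ v : Fin n → ZMod p,
                (A y u * B x v * g (u + v)))))) := by
          congr 1; congr 1; congr 1; congr 1
          refine Finset.sum_congr rfl fun x _ => Finset.sum_congr rfl fun y _ => ?_
          rw [Finset.mul_sum]
          refine Finset.sum_congr rfl fun u _ => ?_
          rw [Finset.mul_sum]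
          exact Finset.sum_congr rfl fun v _ => hsplit x y u v
  -- norm bounds on the auxiliary products
  have hAle : ∀ y u, ‖A y u‖ ≤ 1 := by
    intro y u
    rw [hA, norm_prod]
    exact Finset.prod_le_one (fun _ _ => norm_nonneg _) (fun S _ => hf _ _ _)
  have hBle : ∀ x v, ‖B x v‖ ≤ 1 := by
    intro x v
    rw [hB, norm_prod]
    exact Finset.prod_le_one (fun _ _ => norm_nonneg _) (fun i _ => hf _ _ _)
  have hDle : ∀ x y, ‖D x y‖ ≤ 1 := by
    intro x y
    rw [hD, norm_prod]
    refine Finset.prod_le_one (fun _ _ => norm_nonneg _) (fun i _ => ?_)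
    rw [norm_prod]
    exact Finset.prod_le_one (fun _ _ => norm_nonneg _) (fun S _ => hf _ _ _)
  -- the big quadruple sum equals card^4 * (U2Inner).re
  have hbig : (∑ x₀ : Fin n → ZMod p, ∑ x₁ : Fin n → ZMod p, ∑ y₀ : Fin n → ZMod p,
      ∑ y₁ : Fin n → ZMod p,
      g (x₀ + y₀) * (starRingEnd ℂ) (g (x₀ + y₁)) * (starRingEnd ℂ) (g (x₁ + y₀))
        * g (x₁ + y₁)).re
      = (Fintype.card (Fin n → ZMod p) : ℝ) ^ 4 * (U2Inner fun _ => g).re := by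
    rw [aux_u2_eq p n g, ← mul_assoc, ← mul_pow, mul_inv_cancel₀ hcR0, one_pow, one_mul]
  have hKq0 : 0 ≤ (U2Inner fun _ => g).re := by
    have h0 := aux_core (V := Fin n → ZMod p) (fun _ => (1:ℂ)) (fun _ => (1:ℂ)) g
      (fun _ => by norm_num) (fun _ => by norm_num)
    rw [hbig] at h0
    have h1 : (0:ℝ) ≤ (Fintype.card (Fin n → ZMod p) : ℝ) ^ 4 *
        ((Fintype.card (Fin n → ZMod p) : ℝ) ^ 4 * (U2Inner fun _ => g).re) :=
      le_trans (by positivity) h0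
    have h2 : (0:ℝ) ≤ ((Fintype.card (Fin n → ZMod p) : ℝ) ^ 4 *
        (Fintype.card (Fin n → ZMod p) : ℝ) ^ 4) * (U2Inner fun _ => g).re := by
      rw [mul_assoc]; exact h1
    have h3 := div_nonneg h2 (le_of_lt (by positivity : (0:ℝ) <
      (Fintype.card (Fin n → ZMod p) : ℝ) ^ 4 * (Fintype.card (Fin n → ZMod p) : ℝ) ^ 4))
    rwa [mul_div_cancel_left₀ _ (by positivity : ((Fintype.card (Fin n → ZMod p) : ℝ) ^ 4 *
      (Fintype.card (Fin n → ZMod p) : ℝ) ^ 4) ≠ 0)] at h3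
  have hK40 : 0 ≤ ((U2Inner fun _ => g).re) ^ ((1:ℝ)/4) := Real.rpow_nonneg hKq0 _
  -- pointwise bound on the inner double sum
  have hTle : ∀ x y, ‖∑ u : Fin n → ZMod p, ∑ v : Fin n → ZMod p,
      (A y u * B x v * g (u + v))‖
      ≤ (Fintype.card (Fin n → ZMod p) : ℝ) ^ 2 * ((U2Inner fun _ => g).re) ^ ((1:ℝ)/4) := by
    intro x y
    have hcore := aux_core (A y) (B x) g (hAle y) (hBle x)
    rw [hbig] at hcore
    have ht0 : (0:ℝ) ≤ ‖∑ u : Fin n → ZMod p, ∑ v : Fin n → ZMod p,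
        (A y u * B x v * g (u + v))‖ := norm_nonneg _
    have h4 : ‖∑ u : Fin n → ZMod p, ∑ v : Fin n → ZMod p,
        (A y u * B x v * g (u + v))‖ ^ 4
        ≤ (Fintype.card (Fin n → ZMod p) : ℝ) ^ 8 * (U2Inner fun _ => g).re := by
      calc ‖∑ u : Fin n → ZMod p, ∑ v : Fin n → ZMod p,
            (A y u * B x v * g (u + v))‖ ^ 4
          ≤ (Fintype.card (Fin n → ZMod p) : ℝ) ^ 4 *
            ((Fintype.card (Fin n → ZMod p) : ℝ) ^ 4 * (U2Inner fun _ => g).re) := hcore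
        _ = (Fintype.card (Fin n → ZMod p) : ℝ) ^ 8 * (U2Inner fun _ => g).re := by ring
    have hrt : ‖∑ u : Fin n → ZMod p, ∑ v : Fin n → ZMod p, (A y u * B x v * g (u + v))‖
        = (‖∑ u : Fin n → ZMod p, ∑ v : Fin n → ZMod p,
            (A y u * B x v * g (u + v))‖ ^ 4) ^ ((1:ℝ)/4) := by
      rw [← Real.rpow_natCast ‖∑ u : Fin n → ZMod p, ∑ v : Fin n → ZMod p,
        (A y u * B x v * g (u + v))‖ 4, ← Real.rpow_mul ht0]
      norm_num
    rw [hrt]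
    calc (‖∑ u : Fin n → ZMod p, ∑ v : Fin n → ZMod p,
          (A y u * B x v * g (u + v))‖ ^ 4) ^ ((1:ℝ)/4)
        ≤ ((Fintype.card (Fin n → ZMod p) : ℝ) ^ 8 * (U2Inner fun _ => g).re) ^ ((1:ℝ)/4) :=
          Real.rpow_le_rpow (by positivity) h4 (by norm_num)
      _ = (Fintype.card (Fin n → ZMod p) : ℝ) ^ 2 * ((U2Inner fun _ => g).re) ^ ((1:ℝ)/4) := by
          rw [Real.mul_rpow (by positivity) hKq0]
          congr 1
          rw [← Real.rpow_natCast (Fintype.card (Fin n → ZMod p) : ℝ) 8,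
            ← Real.rpow_mul hcRpos.le]
          have h8 : ((8:ℕ):ℝ) * ((1:ℝ)/4) = ((2:ℕ):ℝ) := by norm_num
          rw [h8, Real.rpow_natCast]
  -- final assembly
  have hU2 : U2Norm g = ((U2Inner fun _ => g).re) ^ ((1:ℝ)/4) := rfl
  have hsum : ‖∑ x : Fin m → Fin n → ZMod p, ∑ y : Finset (Fin m) → Fin n → ZMod p,
      (D x y * ∑ u : Fin n → ZMod p, ∑ v : Fin n → ZMod p,
        (A y u * B x v * g (u + v)))‖
      ≤ (Fintype.card (Fin m → Fin n → ZMod p) : ℝ) *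
        ((Fintype.card (Finset (Fin m) → Fin n → ZMod p) : ℝ) *
        ((Fintype.card (Fin n → ZMod p) : ℝ) ^ 2 * ((U2Inner fun _ => g).re) ^ ((1:ℝ)/4))) := by
    calc ‖∑ x : Fin m → Fin n → ZMod p, ∑ y : Finset (Fin m) → Fin n → ZMod p,
        (D x y * ∑ u : Fin n → ZMod p, ∑ v : Fin n → ZMod p, (A y u * B x v * g (u + v)))‖
        ≤ ∑ x : Fin m → Fin n → ZMod p, ∑ y : Finset (Fin m) → Fin n → ZMod p,
          ‖D x y * ∑ u : Fin n → ZMod p, ∑ v : Fin n → ZMod p,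
            (A y u * B x v * g (u + v))‖ := by
          refine le_trans (norm_sum_le _ _) (Finset.sum_le_sum fun x _ => norm_sum_le _ _)
      _ ≤ ∑ _x : Fin m → Fin n → ZMod p, ∑ _y : Finset (Fin m) → Fin n → ZMod p,
          ((Fintype.card (Fin n → ZMod p) : ℝ) ^ 2 * ((U2Inner fun _ => g).re) ^ ((1:ℝ)/4)) := by
          refine Finset.sum_le_sum fun x _ => Finset.sum_le_sum fun y _ => ?_
          rw [norm_mul]
          calc ‖D x y‖ * ‖∑ u : Fin n → ZMod p, ∑ v : Fin n → ZMod p,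
              (A y u * B x v * g (u + v))‖
              ≤ 1 * ((Fintype.card (Fin n → ZMod p) : ℝ) ^ 2 *
                ((U2Inner fun _ => g).re) ^ ((1:ℝ)/4)) :=
                mul_le_mul (hDle x y) (hTle x y) (norm_nonneg _) zero_le_one
            _ = (Fintype.card (Fin n → ZMod p) : ℝ) ^ 2 *
                ((U2Inner fun _ => g).re) ^ ((1:ℝ)/4) := one_mul _
      _ = (Fintype.card (Fin m → Fin n → ZMod p) : ℝ) *
          ((Fintype.card (Finset (Fin m) → Fin n → ZMod p) : ℝ) *
          ((Fintype.card (Fin n → ZMod p) : ℝ) ^ 2 * ((U2Inner fun _ => g).re) ^ ((1:ℝ)/4))) := by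
          simp only [Finset.sum_const, Finset.card_univ, nsmul_eq_mul]
  rw [hIP, hU2]
  have hnorm : ‖(Fintype.card (Fin m → Fin n → ZMod p) : ℂ)⁻¹ *
      ((Fintype.card (Finset (Fin m) → Fin n → ZMod p) : ℂ)⁻¹ *
      ((Fintype.card (Fin n → ZMod p) : ℂ)⁻¹ * ((Fintype.card (Fin n → ZMod p) : ℂ)⁻¹ *
      ∑ x : Fin m → Fin n → ZMod p, ∑ y : Finset (Fin m) → Fin n → ZMod p,
        (D x y * ∑ u : Fin n → ZMod p, ∑ v : Fin n → ZMod p,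
          (A y u * B x v * g (u + v))))))‖
      = (Fintype.card (Fin m → Fin n → ZMod p) : ℝ)⁻¹ *
        ((Fintype.card (Finset (Fin m) → Fin n → ZMod p) : ℝ)⁻¹ *
        ((Fintype.card (Fin n → ZMod p) : ℝ)⁻¹ * ((Fintype.card (Fin n → ZMod p) : ℝ)⁻¹ *
        ‖∑ x : Fin m → Fin n → ZMod p, ∑ y : Finset (Fin m) → Fin n → ZMod p,
          (D x y * ∑ u : Fin n → ZMod p, ∑ v : Fin n → ZMod p,
            (A y u * B x v * g (u + v)))‖))) := by
    simp [norm_mul, norm_inv, Complex.norm_natCast]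
  rw [hnorm]
  have hmono : (Fintype.card (Fin m → Fin n → ZMod p) : ℝ)⁻¹ *
      ((Fintype.card (Finset (Fin m) → Fin n → ZMod p) : ℝ)⁻¹ *
      ((Fintype.card (Fin n → ZMod p) : ℝ)⁻¹ * ((Fintype.card (Fin n → ZMod p) : ℝ)⁻¹ *
      ‖∑ x : Fin m → Fin n → ZMod p, ∑ y : Finset (Fin m) → Fin n → ZMod p,
        (D x y * ∑ u : Fin n → ZMod p, ∑ v : Fin n → ZMod p,
          (A y u * B x v * g (u + v)))‖)))
      ≤ (Fintype.card (Fin m → Fin n → ZMod p) : ℝ)⁻¹ *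
        ((Fintype.card (Finset (Fin m) → Fin n → ZMod p) : ℝ)⁻¹ *
        ((Fintype.card (Fin n → ZMod p) : ℝ)⁻¹ * ((Fintype.card (Fin n → ZMod p) : ℝ)⁻¹ *
        ((Fintype.card (Fin m → Fin n → ZMod p) : ℝ) *
        ((Fintype.card (Finset (Fin m) → Fin n → ZMod p) : ℝ) *
        ((Fintype.card (Fin n → ZMod p) : ℝ) ^ 2 * ((U2Inner fun _ => g).re) ^ ((1:ℝ)/4))))))) := by
    refine mul_le_mul_of_nonneg_left ?_ (by positivity)
    refine mul_le_mul_of_nonneg_left ?_ (by positivity)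
    refine mul_le_mul_of_nonneg_left ?_ (by positivity)
    exact mul_le_mul_of_nonneg_left hsum (by positivity)
  refine le_trans hmono (le_of_eq ?_)
  have hid : ∀ (a b c K : ℝ), a ≠ 0 → b ≠ 0 → c ≠ 0 →
      a⁻¹ * (b⁻¹ * (c⁻¹ * (c⁻¹ * (a * (b * (c ^ 2 * K)))))) = K := by
    intro a b c K ha hb hc
    field_simp
  exact hid _ _ _ _ hNxpos.ne' hNypos.ne' hcR0

end TW
end

section
/- Let p be prime and m ≥ 2 an integer. Suppose that for each i, j ∈ [m] and S ⊆ [m]², f_{i,j,S} : 𝔽_p^n → ℂ satisfies ‖f_{i,j,S}‖_∞ ≤ 1. Then |T_{m-IP₂}((f_{i,j,S})_{i,j∈[m], S⊆[m]²})| ≤ min_{i,j∈[m], S⊆[m]²} ‖f_{i,j,S}‖_{U³}. -/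
open scoped BigOperators Matrix

namespace TW

noncomputable section Proof

open Finset

private lemma expC_const_mul {α : Type*} [Fintype α] (c : ℂ) (F : α → ℂ) :
    expC (univ : Finset α) (fun a => c * F a) = c * expC univ F := by
  simp only [expC, Finset.mul_sum]
  exact Finset.sum_congr rfl fun a _ => by ring

private lemma conj_expC {α : Type*} [Fintype α] (F : α → ℂ) :
    (starRingEnd ℂ) (expC (univ : Finset α) F)
      = expC univ fun a => (starRingEnd ℂ) (F a) := by
  simp [expC, map_mul, map_sum, map_inv₀, map_natCast]

private lemma expC_mul_conj {α : Type*} [Fintype α] (F : α → ℂ) :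
    expC (univ : Finset α) F * (starRingEnd ℂ) (expC univ F)
      = expC univ fun a₀ => expC univ fun a₁ => F a₀ * (starRingEnd ℂ) (F a₁) := by
  rw [conj_expC]
  simp only [expC, ← Finset.mul_sum, ← Finset.sum_mul]
  ring

private lemma norm_sq_expC {α : Type*} [Fintype α] (F : α → ℂ) :
    ((‖expC (univ : Finset α) F‖ ^ 2 : ℝ) : ℂ)
      = expC univ fun a₀ => expC univ fun a₁ => F a₀ * (starRingEnd ℂ) (F a₁) := by
  rw [← expC_mul_conj, Complex.mul_conj']
  exact Complex.ofReal_pow _ _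

private lemma expC_nest {α β : Type*} [Fintype α] [Fintype β] (F : α → β → ℂ) :
    expC (univ : Finset α) (fun a => expC (univ : Finset β) fun b => F a b)
      = expC (univ : Finset (α × β)) fun q => F q.1 q.2 := by
  simp only [expC, Finset.mul_sum, Finset.card_univ, Fintype.card_prod,
    Fintype.sum_prod_type]
  refine Finset.sum_congr rfl fun a _ => Finset.sum_congr rfl fun b _ => ?_
  push_cast
  ring

private lemma expC_perm {α β : Type*} [Fintype α] [Fintype β] (e : α ≃ β) (F : α → ℂ)
    (G : β → ℂ) (h : ∀ a, F a = G (e a)) :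
    expC (univ : Finset α) F = expC (univ : Finset β) G := by
  simp only [expC, Finset.card_univ]
  rw [Fintype.card_congr e, Fintype.sum_equiv e F G h]

private lemma expC_congr {α : Type*} [Fintype α] {F G : α → ℂ} (h : ∀ a, F a = G a) :
    expC (univ : Finset α) F = expC univ G := congrArg _ (funext h)

private def permA {α β γ : Type*} : (α × β) × γ ≃ (β × γ) × α where
  toFun q := ((q.1.2, q.2), q.1.1)
  invFun q := ((q.2, q.1.1), q.1.2)
  left_inv := fun ⟨⟨_, _⟩, _⟩ => rfl
  right_inv := fun ⟨⟨_, _⟩, _⟩ => rfl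

private def permB {α β γ δ : Type*} : ((α × β) × γ) × δ ≃ ((γ × δ) × β) × α where
  toFun q := (((q.1.2, q.2), q.1.1.2), q.1.1.1)
  invFun r := (((r.2, r.1.2), r.1.1.1), r.1.1.2)
  left_inv := fun ⟨⟨⟨_, _⟩, _⟩, _⟩ => rfl
  right_inv := fun ⟨⟨⟨_, _⟩, _⟩, _⟩ => rfl

private def permC {α β γ δ : Type*} : ((α × β) × γ) × δ ≃ (α × (γ × δ)) × β where
  toFun q := ((q.1.1.1, (q.1.2, q.2)), q.1.1.2)
  invFun r := (((r.1.1, r.2), r.1.2.1), r.1.2.2)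
  left_inv := fun ⟨⟨⟨_, _⟩, _⟩, _⟩ => rfl
  right_inv := fun ⟨⟨_, _, _⟩, _⟩ => rfl

private def permD {α β γ δ ε ζ : Type*} :
    ((((α × β) × γ) × δ) × ε) × ζ ≃ ((((α × γ) × ε) × β) × δ) × ζ where
  toFun q := (((((q.1.1.1.1.1, q.1.1.1.2), q.1.2), q.1.1.1.1.2), q.1.1.2), q.2)
  invFun r := (((((r.1.1.1.1.1, r.1.1.2), r.1.1.1.1.2), r.1.2), r.1.1.1.2), r.2)
  left_inv := fun ⟨⟨⟨⟨⟨_, _⟩, _⟩, _⟩, _⟩, _⟩ => rfl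
  right_inv := fun ⟨⟨⟨⟨⟨_, _⟩, _⟩, _⟩, _⟩, _⟩ => rfl

private lemma expR_nonneg {α : Type*} [Fintype α] {g : α → ℝ} (h : ∀ a, 0 ≤ g a) :
    0 ≤ expR (univ : Finset α) g :=
  mul_nonneg (by positivity) (Finset.sum_nonneg fun a _ => h a)

private lemma expR_mono {α : Type*} [Fintype α] {g h : α → ℝ} (hle : ∀ a, g a ≤ h a) :
    expR (univ : Finset α) g ≤ expR univ h :=
  mul_le_mul_of_nonneg_left (Finset.sum_le_sum fun a _ => hle a) (by positivity)

private lemma expR_sq {α : Type*} [Fintype α] (g : α → ℝ) :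
    (expR (univ : Finset α) g) ^ 2 ≤ expR univ fun a => g a ^ 2 := by
  unfold expR
  rcases isEmpty_or_nonempty α with hα | hα
  · simp
  · have hc : (0:ℝ) < ((univ : Finset α).card : ℝ) := by
      exact_mod_cast Finset.card_pos.mpr Finset.univ_nonempty
    have h1 : (∑ a, g a) ^ 2 ≤ ((univ : Finset α).card : ℝ) * ∑ a, g a ^ 2 :=
      sq_sum_le_card_mul_sum_sq
    rw [mul_pow]
    calc (((univ : Finset α).card : ℝ)⁻¹) ^ 2 * (∑ a, g a) ^ 2
        ≤ (((univ : Finset α).card : ℝ)⁻¹) ^ 2 *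
            (((univ : Finset α).card : ℝ) * ∑ a, g a ^ 2) :=
          mul_le_mul_of_nonneg_left h1 (by positivity)
      _ = ((univ : Finset α).card : ℝ)⁻¹ * ∑ a, g a ^ 2 := by
          field_simp

private lemma norm_expC_le_expR {α : Type*} [Fintype α] (F : α → ℂ) :
    ‖expC (univ : Finset α) F‖ ≤ expR (univ : Finset α) fun a => ‖F a‖ := by
  unfold expC expR
  rw [norm_mul, norm_inv]
  have h : ‖(((univ : Finset α).card : ℕ) : ℂ)‖ = (((univ : Finset α).card : ℕ) : ℝ) := by
    simp
  rw [h]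
  exact mul_le_mul_of_nonneg_left (norm_sum_le _ _) (by positivity)

private lemma re_expC {α : Type*} [Fintype α] (F : α → ℂ) :
    (expC (univ : Finset α) F).re = expR univ fun a => (F a).re := by
  unfold expC expR
  have h : (((univ : Finset α).card : ℕ) : ℂ)⁻¹ * ∑ x, F x
      = ((((univ : Finset α).card : ℝ)⁻¹ : ℝ) : ℂ) * ∑ x, F x := by
    push_cast
    ring
  rw [h, Complex.re_ofReal_mul, Complex.re_sum]

private lemma re_expC_ofReal {α : Type*} [Fintype α] (g : α → ℝ) :
    (expC (univ : Finset α) fun a => ((g a : ℝ) : ℂ)).re = expR univ g := by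
  rw [re_expC]
  simp only [Complex.ofReal_re]

private lemma norm_expC_le_const {α : Type*} [Fintype α] {F : α → ℂ} {C : ℝ} (hC : 0 ≤ C)
    (h : ∀ a, ‖F a‖ ≤ C) : ‖expC (univ : Finset α) F‖ ≤ C := by
  refine (norm_expC_le_expR F).trans ?_
  rcases isEmpty_or_nonempty α with hα | hα
  · simpa [expR] using hC
  · have hc : (0:ℝ) < ((univ : Finset α).card : ℝ) := by
      exact_mod_cast Finset.card_pos.mpr Finset.univ_nonempty
    calc expR (univ : Finset α) (fun a => ‖F a‖) ≤ expR univ (fun _ => C) := expR_mono h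
      _ = C := by
          unfold expR
          rw [Finset.sum_const, nsmul_eq_mul]
          field_simp

private lemma expC_update {ι V : Type*} [Fintype ι] [DecidableEq ι] [Fintype V]
    [AddCommGroup V] [DecidableEq V] [Nonempty V] (i : ι) (g : (ι → V) → ℂ) :
    expC (univ : Finset (ι → V)) g
      = expC (univ : Finset (ι → V)) fun x =>
          expC (univ : Finset V) fun s => g (Function.update x i s) := by
  have key : (∑ x : ι → V, ∑ s : V, g (Function.update x i s))
      = (Fintype.card V : ℂ) * ∑ x : ι → V, g x := by
    have h1 : ∀ x : ι → V, (∑ s : V, g (Function.update x i s))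
        = ∑ s : V, g (Function.update x i (x i + s)) := by
      intro x
      exact (Fintype.sum_equiv (Equiv.addLeft (x i))
        (fun s => g (Function.update x i (x i + s)))
        (fun s => g (Function.update x i s)) (fun s => rfl)).symm
    simp only [h1]
    rw [Finset.sum_comm]
    have h2 : ∀ s : V, (∑ x : ι → V, g (Function.update x i (x i + s)))
        = ∑ x : ι → V, g x := by
      intro s
      refine Fintype.sum_equiv (Equiv.addRight (fun j => if j = i then s else 0 : ι → V))
        _ _ (fun x => ?_)
      congr 1
      funext j
      by_cases hj : j = i
      · subst hj
        simp [Function.update_self]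
      · simp [Function.update_of_ne hj, hj]
    simp only [h2, Finset.sum_const, Finset.card_univ, nsmul_eq_mul]
  have hV : ((Fintype.card V : ℂ)) ≠ 0 := Nat.cast_ne_zero.mpr Fintype.card_ne_zero
  simp only [expC, ← Finset.mul_sum, Finset.card_univ]
  rw [key, inv_mul_cancel_left₀ hV]

private lemma triple_update {ι₁ ι₂ ι₃ V : Type*} [Fintype ι₁] [DecidableEq ι₁]
    [Fintype ι₂] [DecidableEq ι₂] [Fintype ι₃] [DecidableEq ι₃]
    [Fintype V] [AddCommGroup V] [DecidableEq V] [Nonempty V]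
    (i : ι₁) (j : ι₂) (S : ι₃) (P : (ι₁ → V) → (ι₂ → V) → (ι₃ → V) → ℂ) :
    (expC univ fun x => expC univ fun y => expC univ fun z => P x y z)
      = expC univ fun x => expC univ fun s => expC univ fun y => expC univ fun t =>
          expC univ fun z => expC univ fun u =>
            P (Function.update x i s) (Function.update y j t) (Function.update z S u) := by
  rw [expC_update i (fun x => expC univ fun y => expC univ fun z => P x y z)]
  refine congrArg _ (funext fun x => congrArg _ (funext fun s => ?_))
  beta_reduce
  rw [expC_update j (fun y => expC univ fun z => P (Function.update x i s) y z)]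
  refine congrArg _ (funext fun y => congrArg _ (funext fun t => ?_))
  beta_reduce
  exact expC_update S (fun z => P (Function.update x i s) (Function.update y j t) z)

private lemma prod_split {α M : Type*} [Fintype α] [DecidableEq α] [CommMonoid M]
    (a : α) (g : α → M) :
    (∏ x, g x) = g a * ∏ x ∈ univ.erase a, g x :=
  (Finset.mul_prod_erase _ _ (Finset.mem_univ a)).symm

private def e3 : Bool × Bool × Bool ≃ (Fin 3 → Bool) where
  toFun p := ![p.1, p.2.1, p.2.2]
  invFun ω := (ω 0, ω 1, ω 2)
  left_inv := by decide
  right_inv := by decide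

private lemma prod_cube (g : (Fin 3 → Bool) → ℂ) :
    (∏ ω : Fin 3 → Bool, g ω)
      = g ![false,false,false] * g ![true,false,false] * g ![false,true,false] *
        g ![true,true,false] * g ![false,false,true] * g ![true,false,true] *
        g ![false,true,true] * g ![true,true,true] := by
  rw [← Equiv.prod_comp e3 g]
  simp only [Fintype.prod_prod_type, Fintype.prod_bool, e3, Equiv.coe_fn_mk]
  ring

variable {p : ℕ}

private def Efun [NeZero p] {n : ℕ} (f : (Fin n → ZMod p) → ℂ)
    (e : ((Fin n → ZMod p) × (Fin n → ZMod p)) × ((Fin n → ZMod p) × (Fin n → ZMod p))) : ℂ :=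
  expC univ fun u => f (e.1.1 + e.2.1 + u) * (starRingEnd ℂ) (f (e.1.2 + e.2.1 + u)) *
    (starRingEnd ℂ) (f (e.1.1 + e.2.2 + u)) * f (e.1.2 + e.2.2 + u)

set_option maxHeartbeats 1000000 in
private lemma u3point [NeZero p] {n : ℕ} (f : (Fin n → ZMod p) → ℂ)
    (s₀ s₁ t₀ t₁ : Fin n → ZMod p) :
    (expC univ fun u₀ => expC univ fun u₁ => ∏ ω : Fin 3 → Bool,
        cConj (wt ω) (f (bsel (ω 0) s₀ s₁ + bsel (ω 1) t₀ t₁ + bsel (ω 2) u₀ u₁)))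
      = ((‖Efun f ((s₀, s₁), (t₀, t₁))‖ ^ 2 : ℝ) : ℂ) := by
  rw [show ((‖Efun f ((s₀, s₁), (t₀, t₁))‖ ^ 2 : ℝ) : ℂ)
      = expC univ fun u₀ => expC univ fun u₁ =>
          (f (s₀ + t₀ + u₀) * (starRingEnd ℂ) (f (s₁ + t₀ + u₀)) *
            (starRingEnd ℂ) (f (s₀ + t₁ + u₀)) * f (s₁ + t₁ + u₀)) *
          (starRingEnd ℂ) (f (s₀ + t₀ + u₁) * (starRingEnd ℂ) (f (s₁ + t₀ + u₁)) *
            (starRingEnd ℂ) (f (s₀ + t₁ + u₁)) * f (s₁ + t₁ + u₁))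
      from norm_sq_expC _]
  refine expC_congr fun u₀ => expC_congr fun u₁ => ?_
  rw [prod_cube]
  have w0 : wt ![false,false,false] = 0 := by decide
  have w1 : wt ![true,false,false] = 1 := by decide
  have w2 : wt ![false,true,false] = 1 := by decide
  have w3 : wt ![true,true,false] = 2 := by decide
  have w4 : wt ![false,false,true] = 1 := by decide
  have w5 : wt ![true,false,true] = 2 := by decide
  have w6 : wt ![false,true,true] = 2 := by decide
  have w7 : wt ![true,true,true] = 3 := by decide
  have hv0 : ∀ a b c : Bool, (![a,b,c] : Fin 3 → Bool) 0 = a := fun _ _ _ => rfl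
  have hv1 : ∀ a b c : Bool, (![a,b,c] : Fin 3 → Bool) 1 = b := fun _ _ _ => rfl
  have hv2 : ∀ a b c : Bool, (![a,b,c] : Fin 3 → Bool) 2 = c := fun _ _ _ => rfl
  simp only [w0, w1, w2, w3, w4, w5, w6, w7, hv0, hv1, hv2, cConj, bsel]
  norm_num
  ring

set_option maxHeartbeats 1000000 in
private lemma u3c [NeZero p] {n : ℕ} (f : (Fin n → ZMod p) → ℂ) :
    U3Inner (fun _ => f)
      = expC univ fun e : ((Fin n → ZMod p) × (Fin n → ZMod p)) ×
          ((Fin n → ZMod p) × (Fin n → ZMod p)) => ((‖Efun f e‖ ^ 2 : ℝ) : ℂ) := by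
  unfold U3Inner
  simp only [u3point f]
  rw [expC_nest, expC_nest, expC_nest]
  exact expC_perm
    (Equiv.prodAssoc ((Fin n → ZMod p) × (Fin n → ZMod p)) (Fin n → ZMod p) (Fin n → ZMod p))
    _ _ (fun ⟨⟨⟨s₀, s₁⟩, t₀⟩, t₁⟩ => rfl)

private lemma u3re [NeZero p] {n : ℕ} (f : (Fin n → ZMod p) → ℂ) :
    (U3Inner (fun _ => f)).re
      = expR univ fun e : ((Fin n → ZMod p) × (Fin n → ZMod p)) ×
          ((Fin n → ZMod p) × (Fin n → ZMod p)) => ‖Efun f e‖ ^ 2 := by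
  rw [u3c, re_expC_ofReal]

private lemma u3re_nonneg [NeZero p] {n : ℕ} (f : (Fin n → ZMod p) → ℂ) :
    0 ≤ (U3Inner (fun _ => f)).re := by
  rw [u3re]
  exact expR_nonneg fun e => by positivity

private lemma u3norm_nonneg [NeZero p] {n : ℕ} (f : (Fin n → ZMod p) → ℂ) :
    0 ≤ U3Norm f :=
  Real.rpow_nonneg (u3re_nonneg f) _

private def Afun [NeZero p] {n : ℕ} (f : (Fin n → ZMod p) → ℂ)
    (b₂ b₃ : (Fin n → ZMod p) → (Fin n → ZMod p) → ℂ)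
    (w : (Fin n → ZMod p) × (Fin n → ZMod p)) : ℂ :=
  expC univ fun s => f (s + w.1 + w.2) * b₂ s w.2 * b₃ s w.1

private def Bfun [NeZero p] {n : ℕ} (f : (Fin n → ZMod p) → ℂ)
    (b₃ : (Fin n → ZMod p) → (Fin n → ZMod p) → ℂ)
    (r : ((Fin n → ZMod p) × (Fin n → ZMod p)) × (Fin n → ZMod p)) : ℂ :=
  expC univ fun t => f (r.1.1 + t + r.2) * (starRingEnd ℂ) (f (r.1.2 + t + r.2)) *
    b₃ r.1.1 t * (starRingEnd ℂ) (b₃ r.1.2 t)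

set_option maxHeartbeats 1000000 in
private lemma cre_le_norm (z : ℂ) : z.re ≤ ‖z‖ :=
  (le_abs_self _).trans (Complex.abs_re_le_norm z)

private lemma gvn [NeZero p] {n : ℕ} (f : (Fin n → ZMod p) → ℂ)
    (b₁ b₂ b₃ : (Fin n → ZMod p) → (Fin n → ZMod p) → ℂ)
    (h₁ : ∀ t u, ‖b₁ t u‖ ≤ 1) (h₂ : ∀ s u, ‖b₂ s u‖ ≤ 1) (h₃ : ∀ s t, ‖b₃ s t‖ ≤ 1) :
    ‖expC univ fun s => expC univ fun t => expC univ fun u =>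
        f (s + t + u) * b₁ t u * b₂ s u * b₃ s t‖ ≤ U3Norm f := by
  have hT : (expC univ fun s : Fin n → ZMod p => expC univ fun t => expC univ fun u =>
        f (s + t + u) * b₁ t u * b₂ s u * b₃ s t)
      = expC univ fun w : (Fin n → ZMod p) × (Fin n → ZMod p) =>
          b₁ w.1 w.2 * Afun f b₂ b₃ w := by
    have h1 : (fun w : (Fin n → ZMod p) × (Fin n → ZMod p) =>
          b₁ w.1 w.2 * Afun f b₂ b₃ w)
        = fun w : (Fin n → ZMod p) × (Fin n → ZMod p) => expC univ fun s =>
            b₁ w.1 w.2 * (f (s + w.1 + w.2) * b₂ s w.2 * b₃ s w.1) := by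
      funext w
      exact (expC_const_mul _ _).symm
    rw [h1]
    conv_lhs => rw [expC_nest, expC_nest]
    conv_rhs => rw [expC_nest]
    exact expC_perm (permA (α := Fin n → ZMod p) (β := Fin n → ZMod p) (γ := Fin n → ZMod p))
      _ _ (fun ⟨⟨s, t⟩, u⟩ => by dsimp only [permA, Equiv.coe_fn_mk]; ring)
  have c1 : ‖expC univ fun s : Fin n → ZMod p => expC univ fun t => expC univ fun u =>
        f (s + t + u) * b₁ t u * b₂ s u * b₃ s t‖
      ≤ expR univ fun w : (Fin n → ZMod p) × (Fin n → ZMod p) => ‖Afun f b₂ b₃ w‖ := by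
    rw [hT]
    refine (norm_expC_le_expR _).trans (expR_mono fun w => ?_)
    rw [norm_mul]
    exact mul_le_of_le_one_left (norm_nonneg _) (h₁ w.1 w.2)
  have c2 : ‖expC univ fun s : Fin n → ZMod p => expC univ fun t => expC univ fun u =>
        f (s + t + u) * b₁ t u * b₂ s u * b₃ s t‖ ^ 2
      ≤ expR univ fun w : (Fin n → ZMod p) × (Fin n → ZMod p) => ‖Afun f b₂ b₃ w‖ ^ 2 :=
    (pow_le_pow_left₀ (norm_nonneg _) c1 2).trans (expR_sq _)
  have keyC₁ : (expC univ fun w : (Fin n → ZMod p) × (Fin n → ZMod p) =>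
        ((‖Afun f b₂ b₃ w‖ ^ 2 : ℝ) : ℂ))
      = expC univ fun r : ((Fin n → ZMod p) × (Fin n → ZMod p)) × (Fin n → ZMod p) =>
          (b₂ r.1.1 r.2 * (starRingEnd ℂ) (b₂ r.1.2 r.2)) * Bfun f b₃ r := by
    have h1 : (fun w : (Fin n → ZMod p) × (Fin n → ZMod p) =>
          ((‖Afun f b₂ b₃ w‖ ^ 2 : ℝ) : ℂ))
        = fun w : (Fin n → ZMod p) × (Fin n → ZMod p) =>
            expC univ fun s₀ => expC univ fun s₁ =>
            (f (s₀ + w.1 + w.2) * b₂ s₀ w.2 * b₃ s₀ w.1) *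
            (starRingEnd ℂ) (f (s₁ + w.1 + w.2) * b₂ s₁ w.2 * b₃ s₁ w.1) := by
      funext w
      exact norm_sq_expC _
    have h2 : (fun r : ((Fin n → ZMod p) × (Fin n → ZMod p)) × (Fin n → ZMod p) =>
          (b₂ r.1.1 r.2 * (starRingEnd ℂ) (b₂ r.1.2 r.2)) * Bfun f b₃ r)
        = fun r : ((Fin n → ZMod p) × (Fin n → ZMod p)) × (Fin n → ZMod p) =>
            expC univ fun t =>
            (b₂ r.1.1 r.2 * (starRingEnd ℂ) (b₂ r.1.2 r.2)) *
            (f (r.1.1 + t + r.2) * (starRingEnd ℂ) (f (r.1.2 + t + r.2)) *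
              b₃ r.1.1 t * (starRingEnd ℂ) (b₃ r.1.2 t)) := by
      funext r
      exact (expC_const_mul _ _).symm
    rw [h1, h2]
    conv_lhs => rw [expC_nest, expC_nest]
    conv_rhs => rw [expC_nest]
    exact expC_perm
      (permB (α := Fin n → ZMod p) (β := Fin n → ZMod p) (γ := Fin n → ZMod p)
        (δ := Fin n → ZMod p))
      _ _ (fun ⟨⟨⟨t, u⟩, s₀⟩, s₁⟩ => by
        dsimp only [permB, Equiv.coe_fn_mk]
        simp only [map_mul]
        ring)
  have c3 : (expR univ fun w : (Fin n → ZMod p) × (Fin n → ZMod p) => ‖Afun f b₂ b₃ w‖ ^ 2)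
      ≤ expR univ fun r : ((Fin n → ZMod p) × (Fin n → ZMod p)) × (Fin n → ZMod p) =>
          ‖Bfun f b₃ r‖ := by
    rw [← re_expC_ofReal (fun w : (Fin n → ZMod p) × (Fin n → ZMod p) =>
      ‖Afun f b₂ b₃ w‖ ^ 2), keyC₁]
    refine (cre_le_norm _).trans ((norm_expC_le_expR _).trans (expR_mono fun r => ?_))
    rw [norm_mul]
    refine mul_le_of_le_one_left (norm_nonneg _) ?_
    rw [norm_mul, RCLike.norm_conj]
    exact mul_le_one₀ (h₂ _ _) (norm_nonneg _) (h₂ _ _)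
  have c4 : ‖expC univ fun s : Fin n → ZMod p => expC univ fun t => expC univ fun u =>
        f (s + t + u) * b₁ t u * b₂ s u * b₃ s t‖ ^ 4
      ≤ expR univ fun r : ((Fin n → ZMod p) × (Fin n → ZMod p)) × (Fin n → ZMod p) =>
          ‖Bfun f b₃ r‖ ^ 2 := by
    have hA2 : (0:ℝ) ≤ expR univ fun w : (Fin n → ZMod p) × (Fin n → ZMod p) =>
        ‖Afun f b₂ b₃ w‖ ^ 2 := expR_nonneg fun w => by positivity
    calc ‖expC univ fun s : Fin n → ZMod p => expC univ fun t => expC univ fun u =>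
          f (s + t + u) * b₁ t u * b₂ s u * b₃ s t‖ ^ 4
        = (‖expC univ fun s : Fin n → ZMod p => expC univ fun t => expC univ fun u =>
          f (s + t + u) * b₁ t u * b₂ s u * b₃ s t‖ ^ 2) ^ 2 := by ring
      _ ≤ (expR univ fun w : (Fin n → ZMod p) × (Fin n → ZMod p) =>
            ‖Afun f b₂ b₃ w‖ ^ 2) ^ 2 := pow_le_pow_left₀ (by positivity) c2 2
      _ ≤ (expR univ fun r : ((Fin n → ZMod p) × (Fin n → ZMod p)) × (Fin n → ZMod p) =>
            ‖Bfun f b₃ r‖) ^ 2 := pow_le_pow_left₀ hA2 c3 2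
      _ ≤ expR univ fun r : ((Fin n → ZMod p) × (Fin n → ZMod p)) × (Fin n → ZMod p) =>
            ‖Bfun f b₃ r‖ ^ 2 := expR_sq _
  have keyC₂ : (expC univ fun r : ((Fin n → ZMod p) × (Fin n → ZMod p)) × (Fin n → ZMod p) =>
        ((‖Bfun f b₃ r‖ ^ 2 : ℝ) : ℂ))
      = expC univ fun e : ((Fin n → ZMod p) × (Fin n → ZMod p)) ×
          ((Fin n → ZMod p) × (Fin n → ZMod p)) =>
          (b₃ e.1.1 e.2.1 * (starRingEnd ℂ) (b₃ e.1.2 e.2.1) *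
            (starRingEnd ℂ) (b₃ e.1.1 e.2.2) * b₃ e.1.2 e.2.2) * Efun f e := by
    have h1 : (fun r : ((Fin n → ZMod p) × (Fin n → ZMod p)) × (Fin n → ZMod p) =>
          ((‖Bfun f b₃ r‖ ^ 2 : ℝ) : ℂ))
        = fun r : ((Fin n → ZMod p) × (Fin n → ZMod p)) × (Fin n → ZMod p) =>
            expC univ fun t₀ => expC univ fun t₁ =>
            (f (r.1.1 + t₀ + r.2) * (starRingEnd ℂ) (f (r.1.2 + t₀ + r.2)) *
              b₃ r.1.1 t₀ * (starRingEnd ℂ) (b₃ r.1.2 t₀)) *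
            (starRingEnd ℂ) (f (r.1.1 + t₁ + r.2) * (starRingEnd ℂ) (f (r.1.2 + t₁ + r.2)) *
              b₃ r.1.1 t₁ * (starRingEnd ℂ) (b₃ r.1.2 t₁)) := by
      funext r
      exact norm_sq_expC _
    have h2 : (fun e : ((Fin n → ZMod p) × (Fin n → ZMod p)) ×
          ((Fin n → ZMod p) × (Fin n → ZMod p)) =>
          (b₃ e.1.1 e.2.1 * (starRingEnd ℂ) (b₃ e.1.2 e.2.1) *
            (starRingEnd ℂ) (b₃ e.1.1 e.2.2) * b₃ e.1.2 e.2.2) * Efun f e)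
        = fun e : ((Fin n → ZMod p) × (Fin n → ZMod p)) ×
            ((Fin n → ZMod p) × (Fin n → ZMod p)) => expC univ fun u =>
            (b₃ e.1.1 e.2.1 * (starRingEnd ℂ) (b₃ e.1.2 e.2.1) *
              (starRingEnd ℂ) (b₃ e.1.1 e.2.2) * b₃ e.1.2 e.2.2) *
            (f (e.1.1 + e.2.1 + u) * (starRingEnd ℂ) (f (e.1.2 + e.2.1 + u)) *
              (starRingEnd ℂ) (f (e.1.1 + e.2.2 + u)) * f (e.1.2 + e.2.2 + u)) := by
      funext e
      exact (expC_const_mul _ _).symm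
    rw [h1, h2]
    conv_lhs => rw [expC_nest, expC_nest]
    conv_rhs => rw [expC_nest]
    exact expC_perm
      (permC (α := (Fin n → ZMod p) × (Fin n → ZMod p)) (β := Fin n → ZMod p)
        (γ := Fin n → ZMod p) (δ := Fin n → ZMod p))
      _ _ (fun ⟨⟨⟨s₀, s₁⟩, u⟩, t₀⟩ => by
        dsimp only [permC, Equiv.coe_fn_mk]
        simp only [map_mul, Complex.conj_conj]
        ring)
  have c5 : (expR univ fun r : ((Fin n → ZMod p) × (Fin n → ZMod p)) × (Fin n → ZMod p) =>
        ‖Bfun f b₃ r‖ ^ 2)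
      ≤ expR univ fun e : ((Fin n → ZMod p) × (Fin n → ZMod p)) ×
          ((Fin n → ZMod p) × (Fin n → ZMod p)) => ‖Efun f e‖ := by
    rw [← re_expC_ofReal (fun r : ((Fin n → ZMod p) × (Fin n → ZMod p)) × (Fin n → ZMod p) =>
      ‖Bfun f b₃ r‖ ^ 2), keyC₂]
    refine (cre_le_norm _).trans ((norm_expC_le_expR _).trans (expR_mono fun e => ?_))
    rw [norm_mul]
    refine mul_le_of_le_one_left (norm_nonneg _) ?_
    rw [norm_mul, norm_mul, norm_mul, RCLike.norm_conj, RCLike.norm_conj]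
    exact mul_le_one₀ (mul_le_one₀ (mul_le_one₀ (h₃ _ _) (norm_nonneg _) (h₃ _ _))
      (norm_nonneg _) (h₃ _ _)) (norm_nonneg _) (h₃ _ _)
  have c6 : ‖expC univ fun s : Fin n → ZMod p => expC univ fun t => expC univ fun u =>
        f (s + t + u) * b₁ t u * b₂ s u * b₃ s t‖ ^ 8 ≤ (U3Inner (fun _ => f)).re := by
    rw [u3re]
    have hB2 : (0:ℝ) ≤ expR univ
        fun r : ((Fin n → ZMod p) × (Fin n → ZMod p)) × (Fin n → ZMod p) =>
        ‖Bfun f b₃ r‖ ^ 2 := expR_nonneg fun r => by positivity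
    calc ‖expC univ fun s : Fin n → ZMod p => expC univ fun t => expC univ fun u =>
          f (s + t + u) * b₁ t u * b₂ s u * b₃ s t‖ ^ 8
        = (‖expC univ fun s : Fin n → ZMod p => expC univ fun t => expC univ fun u =>
          f (s + t + u) * b₁ t u * b₂ s u * b₃ s t‖ ^ 4) ^ 2 := by ring
      _ ≤ (expR univ fun r : ((Fin n → ZMod p) × (Fin n → ZMod p)) × (Fin n → ZMod p) =>
            ‖Bfun f b₃ r‖ ^ 2) ^ 2 := pow_le_pow_left₀ (by positivity) c4 2
      _ ≤ (expR univ fun e : ((Fin n → ZMod p) × (Fin n → ZMod p)) ×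
            ((Fin n → ZMod p) × (Fin n → ZMod p)) => ‖Efun f e‖) ^ 2 :=
          pow_le_pow_left₀ hB2 c5 2
      _ ≤ expR univ fun e : ((Fin n → ZMod p) × (Fin n → ZMod p)) ×
            ((Fin n → ZMod p) × (Fin n → ZMod p)) => ‖Efun f e‖ ^ 2 := expR_sq _
  have h1 : ‖expC univ fun s : Fin n → ZMod p => expC univ fun t => expC univ fun u =>
        f (s + t + u) * b₁ t u * b₂ s u * b₃ s t‖
      = (‖expC univ fun s : Fin n → ZMod p => expC univ fun t => expC univ fun u =>
          f (s + t + u) * b₁ t u * b₂ s u * b₃ s t‖ ^ (8 : ℕ)) ^ ((1 : ℝ) / 8) := by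
    rw [← Real.rpow_natCast (‖expC univ fun s : Fin n → ZMod p => expC univ fun t =>
      expC univ fun u => f (s + t + u) * b₁ t u * b₂ s u * b₃ s t‖) 8,
      ← Real.rpow_mul (norm_nonneg _)]
    norm_num
  rw [h1]
  unfold U3Norm
  exact Real.rpow_le_rpow (by positivity) c6 (by norm_num)

end Proof

set_option maxHeartbeats 2000000 in
/-- `IP₂` is controlled by `U³`. -/
theorem statement6 (p : ℕ) [NeZero p] (hp : p.Prime) (n m : ℕ) (hm : 2 ≤ m)
    (f : Fin m → Fin m → Finset (Fin m × Fin m) → (Fin n → ZMod p) → ℂ)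
    (hf : ∀ (i j : Fin m) (S : Finset (Fin m × Fin m)) (x : Fin n → ZMod p),
      ‖f i j S x‖ ≤ 1) :
    ∀ (i j : Fin m) (S : Finset (Fin m × Fin m)), ‖IP2op m f‖ ≤ U3Norm (f i j S) := by
  classical
  intro i j S
  have key : ∀ (x y : Fin m → Fin n → ZMod p) (z : Finset (Fin m × Fin m) → Fin n → ZMod p),
      ‖expC Finset.univ fun s => expC Finset.univ fun t => expC Finset.univ fun u =>
        ∏ i', ∏ j', ∏ S', f i' j' S'
          (Function.update x i s i' + Function.update y j t j' + Function.update z S u S')‖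
      ≤ U3Norm (f i j S) := by
    intro x y z
    have hsplit : ∀ s t u : Fin n → ZMod p,
        (∏ i', ∏ j', ∏ S', f i' j' S'
          (Function.update x i s i' + Function.update y j t j' + Function.update z S u S'))
        = f i j S (s + t + u) *
          (∏ i' ∈ Finset.univ.erase i, ∏ j', ∏ S', f i' j' S'
            (x i' + Function.update y j t j' + Function.update z S u S')) *
          (∏ j' ∈ Finset.univ.erase j, ∏ S', f i j' S'
            (s + y j' + Function.update z S u S')) *
          (∏ S' ∈ Finset.univ.erase S, f i j S' (s + t + z S')) := by
      intro s t u
      rw [prod_split i, prod_split j, prod_split S]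
      simp only [Function.update_self]
      have e1 : (∏ i' ∈ Finset.univ.erase i, ∏ j', ∏ S', f i' j' S'
            (Function.update x i s i' + Function.update y j t j' + Function.update z S u S'))
          = ∏ i' ∈ Finset.univ.erase i, ∏ j', ∏ S', f i' j' S'
            (x i' + Function.update y j t j' + Function.update z S u S') :=
        Finset.prod_congr rfl fun i' hi' => by
          rw [Function.update_of_ne (Finset.mem_erase.mp hi').1]
      have e2 : (∏ j' ∈ Finset.univ.erase j, ∏ S', f i j' S'
            (s + Function.update y j t j' + Function.update z S u S'))
          = ∏ j' ∈ Finset.univ.erase j, ∏ S', f i j' S'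
            (s + y j' + Function.update z S u S') :=
        Finset.prod_congr rfl fun j' hj' => by
          rw [Function.update_of_ne (Finset.mem_erase.mp hj').1]
      have e3 : (∏ S' ∈ Finset.univ.erase S, f i j S' (s + t + Function.update z S u S'))
          = ∏ S' ∈ Finset.univ.erase S, f i j S' (s + t + z S') :=
        Finset.prod_congr rfl fun S' hS' => by
          rw [Function.update_of_ne (Finset.mem_erase.mp hS').1]
      rw [e1, e2, e3]
      ring
    have hb1 : ∀ t u : Fin n → ZMod p,
        ‖∏ i' ∈ Finset.univ.erase i, ∏ j', ∏ S', f i' j' S'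
          (x i' + Function.update y j t j' + Function.update z S u S')‖ ≤ 1 := by
      intro t u
      rw [norm_prod]
      refine Finset.prod_le_one (fun _ _ => norm_nonneg _) fun i' _ => ?_
      rw [norm_prod]
      refine Finset.prod_le_one (fun _ _ => norm_nonneg _) fun j' _ => ?_
      rw [norm_prod]
      exact Finset.prod_le_one (fun _ _ => norm_nonneg _) fun S' _ => hf _ _ _ _
    have hb2 : ∀ s u : Fin n → ZMod p,
        ‖∏ j' ∈ Finset.univ.erase j, ∏ S', f i j' S' (s + y j' + Function.update z S u S')‖ ≤ 1 := by
      intro s u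
      rw [norm_prod]
      refine Finset.prod_le_one (fun _ _ => norm_nonneg _) fun j' _ => ?_
      rw [norm_prod]
      exact Finset.prod_le_one (fun _ _ => norm_nonneg _) fun S' _ => hf _ _ _ _
    have hb3 : ∀ s t : Fin n → ZMod p,
        ‖∏ S' ∈ Finset.univ.erase S, f i j S' (s + t + z S')‖ ≤ 1 := by
      intro s t
      rw [norm_prod]
      exact Finset.prod_le_one (fun _ _ => norm_nonneg _) fun S' _ => hf _ _ _ _
    have hfun : (fun s => expC Finset.univ fun t => expC Finset.univ fun u =>
          ∏ i', ∏ j', ∏ S', f i' j' S'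
            (Function.update x i s i' + Function.update y j t j' + Function.update z S u S'))
        = fun s => expC Finset.univ fun t => expC Finset.univ fun u =>
            f i j S (s + t + u) *
            (∏ i' ∈ Finset.univ.erase i, ∏ j', ∏ S', f i' j' S'
              (x i' + Function.update y j t j' + Function.update z S u S')) *
            (∏ j' ∈ Finset.univ.erase j, ∏ S', f i j' S'
              (s + y j' + Function.update z S u S')) *
            (∏ S' ∈ Finset.univ.erase S, f i j S' (s + t + z S')) :=
      funext fun s => congrArg _ (funext fun t => congrArg _ (funext fun u => hsplit s t u))
    rw [hfun]
    exact gvn (f i j S)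
      (fun t u => ∏ i' ∈ Finset.univ.erase i, ∏ j', ∏ S', f i' j' S'
        (x i' + Function.update y j t j' + Function.update z S u S'))
      (fun s u => ∏ j' ∈ Finset.univ.erase j, ∏ S', f i j' S'
        (s + y j' + Function.update z S u S'))
      (fun s t => ∏ S' ∈ Finset.univ.erase S, f i j S' (s + t + z S'))
      hb1 hb2 hb3
  have main_eq : IP2op m f
      = expC Finset.univ fun x : Fin m → Fin n → ZMod p =>
          expC Finset.univ fun y : Fin m → Fin n → ZMod p =>
            expC Finset.univ fun z : Finset (Fin m × Fin m) → Fin n → ZMod p =>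
              expC Finset.univ fun s => expC Finset.univ fun t => expC Finset.univ fun u =>
                ∏ i', ∏ j', ∏ S', f i' j' S'
                  (Function.update x i s i' + Function.update y j t j' +
                    Function.update z S u S') := by
    unfold IP2op
    rw [triple_update i j S
      (fun x y z => ∏ i', ∏ j', ∏ S', f i' j' S' (x i' + y j' + z S'))]
    conv_lhs => rw [expC_nest, expC_nest, expC_nest, expC_nest, expC_nest]
    conv_rhs => rw [expC_nest, expC_nest, expC_nest, expC_nest, expC_nest]
    exact expC_perm
      (permD (α := Fin m → Fin n → ZMod p) (β := Fin n → ZMod p)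
        (γ := Fin m → Fin n → ZMod p) (δ := Fin n → ZMod p)
        (ε := Finset (Fin m × Fin m) → Fin n → ZMod p) (ζ := Fin n → ZMod p))
      _ _ (fun ⟨⟨⟨⟨⟨_, _⟩, _⟩, _⟩, _⟩, _⟩ => rfl)
  rw [main_eq]
  refine norm_expC_le_const (u3norm_nonneg _) fun x => ?_
  refine norm_expC_le_const (u3norm_nonneg _) fun y => ?_
  refine norm_expC_le_const (u3norm_nonneg _) fun z => ?_
  exact key x y z

end TW
end
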